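/- arXiv:2409.19127 — 6 statements merged into one kernel-verified Lean document; each statement's English description precedes it below -/
import Mathlib

section
/- Let $p \geq 2$ and let $v_1, v_2 \in \mathbb{R}^n$. Then there exist constants $C_p > 0$ and $\delta_0 > 0$, depending only on $p$, such that for all $0 < \delta \leq \delta_0$, $\int_0^1 \int_0^1 |v_1 - (t - s\delta) v_2|^{p-2} \, ds \, dt \geq C_p (\max\{|v_1|, |v_2|\})^{p-2}$. -/
/-!
Write `f r = ‖v₁ - r • v₂‖` and `M = max ‖v₁‖ ‖v₂‖`. Both `v₂` and `v₁` are combinations of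
`v₁ - r₁ • v₂` and `v₁ - r₂ • v₂` with coefficients controlled by `1 / (r₂ - r₁)`, so `f` cannot be
small at two well separated points of `[-1, 1]`: quantitatively `f ≥ 3M/16` on all of `[-1/8, 1/4]`
or on all of `[5/8, 1]`. For `δ ≤ 1/8` the argument `t - sδ` stays in that interval when `t` ranges
over `[0, 1/4]`, respectively `[3/4, 1]`, which gives the bound with `C = (3/16)^(p-2) / 4`.
-/

open MeasureTheory intervalIntegral Set

section TwoPoint

variable {E : Type*} [SeminormedAddCommGroup E] [NormedSpace ℝ E]

theorem mul_max_norm_le_two_mul_max_norm_sub_smul (v w : E) {r₁ r₂ : ℝ} (h12 : r₁ ≤ r₂)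
    (h₁ : |r₁| ≤ 1) (h₂ : |r₂| ≤ 1) :
    (r₂ - r₁) * max ‖v‖ ‖w‖ ≤ 2 * max ‖v - r₁ • w‖ ‖v - r₂ • w‖ := by
  set K := max ‖v - r₁ • w‖ ‖v - r₂ • w‖
  have hK₁ : ‖v - r₁ • w‖ ≤ K := le_max_left _ _
  have hK₂ : ‖v - r₂ • w‖ ≤ K := le_max_right _ _
  have hgap : |r₂ - r₁| = r₂ - r₁ := abs_of_nonneg (sub_nonneg.mpr h12)
  have hw : (r₂ - r₁) * ‖w‖ ≤ 2 * K :=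
    calc (r₂ - r₁) * ‖w‖ = ‖(v - r₁ • w) - (v - r₂ • w)‖ := by
          rw [← hgap, ← Real.norm_eq_abs, ← norm_smul]; congr 1; module
      _ ≤ ‖v - r₁ • w‖ + ‖v - r₂ • w‖ := norm_sub_le _ _
      _ ≤ 2 * K := by linarith
  have hv : (r₂ - r₁) * ‖v‖ ≤ 2 * K :=
    calc (r₂ - r₁) * ‖v‖ = ‖r₂ • (v - r₁ • w) - r₁ • (v - r₂ • w)‖ := by
          rw [← hgap, ← Real.norm_eq_abs, ← norm_smul]; congr 1; module
      _ ≤ |r₂| * ‖v - r₁ • w‖ + |r₁| * ‖v - r₂ • w‖ := by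
          simpa only [norm_smul, Real.norm_eq_abs] using
            norm_sub_le (r₂ • (v - r₁ • w)) (r₁ • (v - r₂ • w))
      _ ≤ 1 * K + 1 * K := by gcongr
      _ = 2 * K := by ring
  rw [mul_max_of_nonneg _ _ (sub_nonneg.mpr h12)]
  exact max_le hv hw

theorem exists_Icc_three_div_sixteen_mul_max_norm_le_norm_sub_smul (v w : E) :
    ∃ a : ℝ, 0 ≤ a ∧ a + 1 / 4 ≤ 1 ∧
      ∀ r ∈ Icc (a - 1 / 8) (a + 1 / 4), 3 / 16 * max ‖v‖ ‖w‖ ≤ ‖v - r • w‖ := by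
  by_cases hright : ∀ r : ℝ, 5 / 8 ≤ r → r ≤ 1 → 3 / 16 * max ‖v‖ ‖w‖ ≤ ‖v - r • w‖
  · exact ⟨3 / 4, by norm_num, by norm_num, by norm_num; exact hright⟩
  push Not at hright
  obtain ⟨r₂, hr₂, hr₂', hsmall⟩ := hright
  refine ⟨0, le_rfl, by norm_num, fun r ⟨hr, hr'⟩ => ?_⟩
  have htwo := mul_max_norm_le_two_mul_max_norm_sub_smul v w (r₁ := r) (r₂ := r₂) (by linarith)
    (abs_le.mpr ⟨by linarith, by linarith⟩) (abs_le.mpr ⟨by linarith, hr₂'⟩)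
  have hM : 0 ≤ max ‖v‖ ‖w‖ := le_max_of_le_left (norm_nonneg v)
  have hbig : 3 / 16 * max ‖v‖ ‖w‖ ≤ max ‖v - r • w‖ ‖v - r₂ • w‖ := by nlinarith
  rcases le_max_iff.mp hbig with h | h
  · exact h
  · exact absurd h (not_le.mpr hsmall)

end TwoPoint

theorem mul_le_integral_integral_of_le_on_Icc {g : ℝ → ℝ → ℝ}
    (hg : Continuous (Function.uncurry g)) (hg₀ : ∀ t s, 0 ≤ g t s) {a b c : ℝ}
    (ha : 0 ≤ a) (hab : a ≤ b) (hb : b ≤ 1) (hc : ∀ t ∈ Icc a b, ∀ s ∈ Icc (0 : ℝ) 1, c ≤ g t s) :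
    (b - a) * c ≤ ∫ t in (0 : ℝ)..1, ∫ s in (0 : ℝ)..1, g t s := by
  have hG : Continuous fun t => ∫ s in (0 : ℝ)..1, g t s :=
    continuous_parametric_intervalIntegral_of_continuous' hg 0 1
  have hinner : ∀ t ∈ Icc a b, c ≤ ∫ s in (0 : ℝ)..1, g t s := fun t ht => by
    simpa using integral_mono_on zero_le_one (intervalIntegrable_const (μ := volume))
      ((hg.comp (Continuous.prodMk_right t)).intervalIntegrable _ _) (hc t ht)
  calc (b - a) * c = ∫ _ in a..b, c := by simp
    _ ≤ ∫ t in a..b, ∫ s in (0 : ℝ)..1, g t s :=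
        integral_mono_on hab intervalIntegrable_const (hG.intervalIntegrable _ _) hinner
    _ ≤ ∫ t in (0 : ℝ)..1, ∫ s in (0 : ℝ)..1, g t s :=
        integral_mono_interval ha hab hb
          (Filter.Eventually.of_forall fun t => integral_nonneg zero_le_one fun s _ => hg₀ t s)
          (hG.intervalIntegrable _ _)

/-- Lemma 3.2: lower bound for the double integral `J`. -/
theorem stmt_0 (n : ℕ) (p : ℝ) (hp : 2 ≤ p) :
    ∃ C δ₀ : ℝ, 0 < C ∧ 0 < δ₀ ∧
      ∀ (v₁ v₂ : EuclideanSpace ℝ (Fin n)) (δ : ℝ), 0 < δ → δ ≤ δ₀ →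
        C * (max ‖v₁‖ ‖v₂‖) ^ (p - 2) ≤
          ∫ t in (0:ℝ)..1, ∫ s in (0:ℝ)..1, ‖v₁ - (t - s * δ) • v₂‖ ^ (p - 2) := by
  have hq : 0 ≤ p - 2 := by linarith
  refine ⟨(3 / 16) ^ (p - 2) / 4, 1 / 8, by positivity, by norm_num, fun v₁ v₂ δ hδ hδ₀ => ?_⟩
  obtain ⟨a, ha, ha', hgood⟩ :=
    exists_Icc_three_div_sixteen_mul_max_norm_le_norm_sub_smul v₁ v₂
  have hM : 0 ≤ max ‖v₁‖ ‖v₂‖ := le_max_of_le_left (norm_nonneg v₁)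
  have hg : Continuous (Function.uncurry fun t s : ℝ => ‖v₁ - (t - s * δ) • v₂‖ ^ (p - 2)) := by
    fun_prop (disch := exact hq)
  have hbound := mul_le_integral_integral_of_le_on_Icc hg (fun t s => by positivity) ha
    (by linarith : a ≤ a + 1 / 4) ha' (c := (3 / 16 * max ‖v₁‖ ‖v₂‖) ^ (p - 2))
    fun t ⟨ht, ht'⟩ s ⟨hs, hs'⟩ => Real.rpow_le_rpow (by positivity)
      (hgood _ ⟨by nlinarith, by nlinarith⟩) hq
  rw [Real.mul_rpow (by norm_num) hM] at hbound
  linarith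
end

section
/- Let $p \geq 2$ and let $v_1, v_2 \in \mathbb{R}^n$. Then there exist positive constants $c_p, C_p$ depending only on $p$ such that $c_p (\max\{|v_1|, |v_2|\})^{p-2} \leq \int_0^1 |v_1 + t v_2|^{p-2} \, dt \leq C_p (\max\{|v_1|, |v_2|\})^{p-2}$. -/
/-!
With `q = p - 2 ≥ 0` and `M = max ‖v‖ ‖w‖`, for `t ∈ [0,1]` the triangle inequality gives `‖v + t • w‖ ≤ 2M`,
hence the upper bound with `C = 2^q`. For the lower bound, if `‖w‖ ≤ 2‖v‖` then
`‖v + t • w‖ ≥ ‖v‖ - ‖w‖/4 ≥ M/4` on `[0, 1/4]`, and otherwise `‖v + t • w‖ ≥ 3‖w‖/4 - ‖v‖ ≥ M/4`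
on `[3/4, 1]`; either way the integrand is at least `(M/4)^q` on an interval of length `1/4`.
-/

open MeasureTheory intervalIntegral

section NormedSpace

variable {E : Type*} [NormedAddCommGroup E] [NormedSpace ℝ E]

lemma norm_add_smul_le_two_mul_max (v w : E) {t : ℝ} (ht : t ∈ Set.Icc (0 : ℝ) 1) :
    ‖v + t • w‖ ≤ 2 * max ‖v‖ ‖w‖ := by
  have htw : ‖t • w‖ ≤ ‖w‖ := by
    rw [norm_smul, Real.norm_of_nonneg ht.1]
    exact mul_le_of_le_one_left (norm_nonneg w) ht.2
  calc ‖v + t • w‖ ≤ ‖v‖ + ‖t • w‖ := norm_add_le _ _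
    _ ≤ 2 * max ‖v‖ ‖w‖ := by linarith [le_max_left ‖v‖ ‖w‖, le_max_right ‖v‖ ‖w‖]

lemma exists_quarter_Icc_max_div_four_le_norm_add_smul (v w : E) :
    ∃ s ∈ Set.Icc (0 : ℝ) (3 / 4),
      ∀ t ∈ Set.Icc s (s + 1 / 4), max ‖v‖ ‖w‖ / 4 ≤ ‖v + t • w‖ := by
  rcases le_or_gt ‖w‖ (2 * ‖v‖) with hw | hw
  · refine ⟨0, by norm_num, fun t ht => ?_⟩
    have htw : ‖t • w‖ ≤ ‖w‖ / 4 := by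
      rw [norm_smul, Real.norm_of_nonneg ht.1]
      nlinarith [norm_nonneg w, ht.2]
    have hM : max ‖v‖ ‖w‖ ≤ 2 * ‖v‖ := max_le (by linarith [norm_nonneg v]) hw
    linarith [norm_sub_le_norm_add v (t • w)]
  · refine ⟨3 / 4, by norm_num, fun t ht => ?_⟩
    have htw : 3 / 4 * ‖w‖ ≤ ‖t • w‖ := by
      rw [norm_smul, Real.norm_of_nonneg (by linarith [ht.1])]
      nlinarith [norm_nonneg w, ht.1]
    have hM : max ‖v‖ ‖w‖ = ‖w‖ := max_eq_right (by linarith [norm_nonneg v])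
    have hrev := norm_sub_le_norm_add (t • w) v
    rw [add_comm] at hrev
    linarith

variable {q : ℝ}

lemma continuous_norm_add_smul_rpow (v w : E) (hq : 0 ≤ q) :
    Continuous fun t : ℝ => ‖v + t • w‖ ^ q :=
  (continuous_const.add (continuous_id.smul continuous_const)).norm.rpow_const
    fun _ => Or.inr hq

lemma integral_norm_add_smul_rpow_le (v w : E) (hq : 0 ≤ q) :
    ∫ t in (0 : ℝ)..1, ‖v + t • w‖ ^ q ≤ 2 ^ q * max ‖v‖ ‖w‖ ^ q := by
  have hbound : ∀ t ∈ Set.Icc (0 : ℝ) 1, ‖v + t • w‖ ^ q ≤ 2 ^ q * max ‖v‖ ‖w‖ ^ q := by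
    intro t ht
    rw [← Real.mul_rpow zero_le_two ((norm_nonneg v).trans (le_max_left _ _))]
    exact Real.rpow_le_rpow (norm_nonneg _) (norm_add_smul_le_two_mul_max v w ht) hq
  simpa using integral_mono_on zero_le_one
    ((continuous_norm_add_smul_rpow v w hq).intervalIntegrable 0 1)
    (intervalIntegrable_const (μ := volume)) hbound

lemma le_integral_norm_add_smul_rpow (v w : E) (hq : 0 ≤ q) :
    4⁻¹ * 4⁻¹ ^ q * max ‖v‖ ‖w‖ ^ q ≤ ∫ t in (0 : ℝ)..1, ‖v + t • w‖ ^ q := by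
  obtain ⟨s, hs, hlarge⟩ := exists_quarter_Icc_max_div_four_le_norm_add_smul v w
  have hM : 0 ≤ max ‖v‖ ‖w‖ := (norm_nonneg v).trans (le_max_left _ _)
  have hpointwise : ∀ t ∈ Set.Icc s (s + 1 / 4), (max ‖v‖ ‖w‖ / 4) ^ q ≤ ‖v + t • w‖ ^ q :=
    fun t ht => Real.rpow_le_rpow (by positivity) (hlarge t ht) hq
  calc 4⁻¹ * 4⁻¹ ^ q * max ‖v‖ ‖w‖ ^ q = (s + 1 / 4 - s) * (max ‖v‖ ‖w‖ / 4) ^ q := by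
        rw [Real.div_rpow hM (by norm_num), Real.inv_rpow (by norm_num)]
        ring
    _ ≤ ∫ t in s..s + 1 / 4, ‖v + t • w‖ ^ q := by
        simpa using integral_mono_on (by linarith) (intervalIntegrable_const (μ := volume))
          ((continuous_norm_add_smul_rpow v w hq).intervalIntegrable _ _) hpointwise
    _ ≤ ∫ t in (0 : ℝ)..1, ‖v + t • w‖ ^ q :=
        integral_mono_interval hs.1 (by linarith) (by linarith [hs.2])
          (Filter.Eventually.of_forall fun _ => Real.rpow_nonneg (norm_nonneg _) q)
          ((continuous_norm_add_smul_rpow v w hq).intervalIntegrable 0 1)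

end NormedSpace

/-- Lemma 5.2: two-sided bound for `∫₀¹ |v₁ + t v₂|^{p-2} dt`. -/
theorem stmt_1 (n : ℕ) (p : ℝ) (hp : 2 ≤ p) :
    ∃ c C : ℝ, 0 < c ∧ 0 < C ∧
      ∀ v₁ v₂ : EuclideanSpace ℝ (Fin n),
        c * (max ‖v₁‖ ‖v₂‖) ^ (p - 2) ≤ ∫ t in (0:ℝ)..1, ‖v₁ + t • v₂‖ ^ (p - 2) ∧
        (∫ t in (0:ℝ)..1, ‖v₁ + t • v₂‖ ^ (p - 2)) ≤ C * (max ‖v₁‖ ‖v₂‖) ^ (p - 2) := by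
  have hq : 0 ≤ p - 2 := sub_nonneg.mpr hp
  refine ⟨4⁻¹ * 4⁻¹ ^ (p - 2), 2 ^ (p - 2), by positivity, by positivity, fun v₁ v₂ => ?_⟩
  exact ⟨le_integral_norm_add_smul_rpow v₁ v₂ hq, integral_norm_add_smul_rpow_le v₁ v₂ hq⟩
end

section
/- Let $p \geq 2$, $v_1, v_2 \in \mathbb{R}^n$ with $0 < |v_1| \leq |v_2|$, and write $v_1 = \alpha v_2 + v_2^\perp$ with $v_2^\perp$ orthogonal to $v_2$ (so $\alpha = (v_1 \cdot v_2)/|v_2|^2$, $|\alpha| \leq 1$). Then $\int_0^1 |v_1 + t v_2|^{p-2} \, dt \geq |v_2|^{p-2} \int_{-1/2}^{1/2} |\tau|^{p-2} \, d\tau$. -/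
open MeasureTheory intervalIntegral
open scoped RealInnerProductSpace

lemma abs_rpow_cont (q : ℝ) (hq : 0 ≤ q) : Continuous fun τ : ℝ => |τ| ^ q :=
  continuous_abs.rpow_const fun _ => Or.inr hq

lemma shift_min (q : ℝ) (hq : 0 ≤ q) (α : ℝ) (hα : -(1/2) ≤ α) :
    ∫ τ in (-(1/2) : ℝ)..(1/2), |τ| ^ q ≤ ∫ τ in α..(α+1), |τ| ^ q := by
  have hc := abs_rpow_cont q hq
  have hint : ∀ a b : ℝ, IntervalIntegrable (fun τ : ℝ => |τ| ^ q) volume a b :=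
    fun a b => hc.intervalIntegrable a b
  have h1 : ∫ τ in (-(1/2):ℝ)..α, |τ| ^ q ≤ ∫ τ in (1/2:ℝ)..(α+1), |τ| ^ q := by
    have hcomp : ∫ τ in (-(1/2):ℝ)..α, |1 + τ| ^ q = ∫ τ in (1/2:ℝ)..(α+1), |τ| ^ q := by
      have := intervalIntegral.integral_comp_add_left (a := (-(1/2):ℝ)) (b := α)
        (fun τ : ℝ => |τ| ^ q) 1
      convert this using 2 <;> ring
    rw [← hcomp]
    apply intervalIntegral.integral_mono_on hα (hint _ _)
      (((continuous_const.add continuous_id).abs.rpow_const fun _ => Or.inr hq).intervalIntegrable _ _)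
    intro x hx
    simp only [Pi.add_apply, id_eq]
    apply Real.rpow_le_rpow (abs_nonneg _) _ hq
    have hx' : -(1/2) ≤ x := hx.1
    rw [abs_of_nonneg (by linarith : (0:ℝ) ≤ 1 + x), abs_le]
    constructor <;> linarith
  have e1 : (∫ τ in (-(1/2):ℝ)..α, |τ|^q) + ∫ τ in α..(α+1), |τ|^q
      = ∫ τ in (-(1/2):ℝ)..(α+1), |τ|^q :=
    intervalIntegral.integral_add_adjacent_intervals (hint _ _) (hint _ _)
  have e2 : (∫ τ in (-(1/2):ℝ)..(1/2:ℝ), |τ|^q) + ∫ τ in (1/2:ℝ)..(α+1), |τ|^q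
      = ∫ τ in (-(1/2):ℝ)..(α+1), |τ|^q :=
    intervalIntegral.integral_add_adjacent_intervals (hint _ _) (hint _ _)
  linarith

lemma shift_min' (q : ℝ) (hq : 0 ≤ q) (α : ℝ) :
    ∫ τ in (-(1/2) : ℝ)..(1/2), |τ| ^ q ≤ ∫ τ in α..(α+1), |τ| ^ q := by
  rcases le_or_gt (-(1/2)) α with h | h
  · exact shift_min q hq α h
  · have hev : ∫ τ in α..(α+1), |τ| ^ q = ∫ τ in (-(α+1))..(-α), |τ| ^ q := by
      have := intervalIntegral.integral_comp_neg (a := -(α+1)) (b := -α) (fun τ : ℝ => |τ| ^ q)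
      simp only [abs_neg, neg_neg] at this
      exact this.symm
    rw [hev]
    have : -α = -(α+1) + 1 := by ring
    rw [this]
    exact shift_min q hq _ (by linarith)

/-- Lower bound for `∫₀¹ |v₁ + t v₂|^{p-2} dt` when `0 < |v₁| ≤ |v₂|`. -/
theorem stmt_3 (n : ℕ) (p : ℝ) (hp : 2 ≤ p)
    (v₁ v₂ w : EuclideanSpace ℝ (Fin n)) (α : ℝ)
    (h₁ : 0 < ‖v₁‖) (h₂ : ‖v₁‖ ≤ ‖v₂‖)
    (hdecomp : v₁ = α • v₂ + w) (hperp : ⟪w, v₂⟫ = 0)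
    (hα : α = ⟪v₁, v₂⟫ / ‖v₂‖ ^ 2) :
    ‖v₂‖ ^ (p - 2) * ∫ τ in (-(1/2) : ℝ)..(1/2), |τ| ^ (p - 2) ≤
      ∫ t in (0:ℝ)..1, ‖v₁ + t • v₂‖ ^ (p - 2) := by
  have hq : (0:ℝ) ≤ p - 2 := by linarith
  have key : ∀ t : ℝ, |α + t| * ‖v₂‖ ≤ ‖v₁ + t • v₂‖ := by
    intro t
    have hrw : v₁ + t • v₂ = (α + t) • v₂ + w := by
      rw [hdecomp]; module
    rw [hrw]
    have hsq : ‖(α + t) • v₂ + w‖ ^ 2 = ((α + t) * ‖v₂‖) ^ 2 + ‖w‖ ^ 2 := by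
      rw [norm_add_sq_real, norm_smul, inner_smul_left, real_inner_comm, hperp]
      simp [mul_pow, sq_abs]
    nlinarith [norm_nonneg ((α + t) • v₂ + w), norm_nonneg w, abs_nonneg (α + t),
      sq_abs (α + t), norm_nonneg v₂, mul_nonneg (abs_nonneg (α + t)) (norm_nonneg v₂)]
  have key2 : ∀ t : ℝ, ‖v₂‖ ^ (p-2) * |α + t| ^ (p-2) ≤ ‖v₁ + t • v₂‖ ^ (p-2) := by
    intro t
    have := Real.rpow_le_rpow (by positivity) (key t) hq
    rwa [Real.mul_rpow (abs_nonneg _) (norm_nonneg _), mul_comm] at this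
  have hc2 : Continuous fun t : ℝ => ‖v₁ + t • v₂‖ ^ (p - 2) :=
    ((continuous_const.add (continuous_id.smul continuous_const)).norm).rpow_const
      fun _ => Or.inr hq
  have hc1 : Continuous fun t : ℝ => ‖v₂‖ ^ (p-2) * |α + t| ^ (p-2) :=
    continuous_const.mul ((continuous_const.add continuous_id).abs.rpow_const fun _ => Or.inr hq)
  have hmono : ∫ t in (0:ℝ)..1, ‖v₂‖ ^ (p-2) * |α + t| ^ (p-2)
      ≤ ∫ t in (0:ℝ)..1, ‖v₁ + t • v₂‖ ^ (p-2) :=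
    intervalIntegral.integral_mono_on zero_le_one (hc1.intervalIntegrable _ _)
      (hc2.intervalIntegrable _ _) (fun x _ => key2 x)
  refine le_trans ?_ hmono
  rw [intervalIntegral.integral_const_mul]
  apply mul_le_mul_of_nonneg_left _ (by positivity)
  have hcomp : ∫ t in (0:ℝ)..1, |α + t| ^ (p-2) = ∫ τ in α..(α+1), |τ| ^ (p-2) := by
    have := intervalIntegral.integral_comp_add_left (a := (0:ℝ)) (b := 1)
      (fun τ : ℝ => |τ| ^ (p-2)) α
    simpa using this
  rw [hcomp]
  exact shift_min' (p-2) hq α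
end

section
/- Let $p \geq 2$ and $h \in C^2(\mathbb{R}^n)$ be nonnegative, positively homogeneous of degree $p$, and suppose there are constants $0 < \lambda \leq \Lambda$ with $\lambda |v|^2 \leq \langle D^2 h(x) v, v \rangle \leq \Lambda |v|^2$ for all unit vectors $x$ and all $v \in \mathbb{R}^n$. Then there exist positive constants $c_p, C_p$ depending only on $p$ such that for all $a, b \in \mathbb{R}^n$: $\lambda c_p |a-b|^p \leq (Dh(a) - Dh(b)) \cdot (a-b) \leq \Lambda C_p |a-b|^2 \max\{|b|^{p-2}, |a-b|^{p-2}\}$. -/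
open MeasureTheory
open scoped RealInnerProductSpace

set_option maxHeartbeats 1000000 in
/-- Lemma 5.3: two-sided bound for `(Dh(a) - Dh(b)) · (a - b)`. -/
theorem stmt_5 (n : ℕ) (p : ℝ) (hp : 2 ≤ p)
    (lam Lam : ℝ) (hlam : 0 < lam) (hlamLam : lam ≤ Lam)
    (h : EuclideanSpace ℝ (Fin n) → ℝ)
    (hC2 : ContDiff ℝ 2 h) (hpos : ∀ x, 0 ≤ h x)
    (hhom : ∀ t : ℝ, 0 < t → ∀ x, h (t • x) = t ^ p * h x)
    (hell : ∀ x : EuclideanSpace ℝ (Fin n), ‖x‖ = 1 →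
      ∀ v : EuclideanSpace ℝ (Fin n),
        lam * ‖v‖ ^ 2 ≤ fderiv ℝ (fderiv ℝ h) x v v ∧
        fderiv ℝ (fderiv ℝ h) x v v ≤ Lam * ‖v‖ ^ 2) :
    ∃ c C : ℝ, 0 < c ∧ 0 < C ∧
      ∀ a b : EuclideanSpace ℝ (Fin n),
        lam * c * ‖a - b‖ ^ p ≤ ⟪gradient h a - gradient h b, a - b⟫ ∧
        ⟪gradient h a - gradient h b, a - b⟫ ≤
          Lam * C * ‖a - b‖ ^ (2 : ℝ) * max (‖b‖ ^ (p - 2)) (‖a - b‖ ^ (p - 2)) := by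
  classical
  have hp0 : (0:ℝ) < p := by linarith
  have hp2 : (0:ℝ) ≤ p - 2 := by linarith
  have hLam : (0:ℝ) < Lam := lt_of_lt_of_le hlam hlamLam
  set f : EuclideanSpace ℝ (Fin n) → (EuclideanSpace ℝ (Fin n) →L[ℝ] ℝ) := fderiv ℝ h
    with hfdef
  set F := fderiv ℝ f with hFdef
  have hdh : Differentiable ℝ h := hC2.differentiable (by norm_num)
  have hf1 : ContDiff ℝ 1 f := hC2.fderiv_right (by norm_num)
  have hdf : Differentiable ℝ f := hf1.differentiable one_ne_zero
  have hFc : Continuous F := hf1.continuous_fderiv one_ne_zero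
  -- Step 1: homogeneity of the gradient
  have step1 : ∀ t : ℝ, 0 < t → ∀ x, f (t • x) = t ^ (p-1) • f x := by
    intro t ht x
    have ht' : t ≠ 0 := ne_of_gt ht
    have hL : HasFDerivAt (fun y : EuclideanSpace ℝ (Fin n) => t • y)
        (t • ContinuousLinearMap.id ℝ (EuclideanSpace ℝ (Fin n))) x :=
      (hasFDerivAt_id x).const_smul t
    have h1 : HasFDerivAt (fun y => h (t • y))
        ((f (t • x)).comp (t • ContinuousLinearMap.id ℝ (EuclideanSpace ℝ (Fin n)))) x :=
      ((hdh (t • x)).hasFDerivAt).comp x hL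
    have h2 : HasFDerivAt (fun y => t ^ p * h y) ((t ^ p) • f x) x :=
      ((hdh x).hasFDerivAt).const_mul (t ^ p)
    rw [show (fun y => h (t • y)) = fun y => t ^ p * h y from funext fun y => hhom t ht y] at h1
    have h3 := h1.unique h2
    have h4 : (f (t • x)).comp (t • ContinuousLinearMap.id ℝ (EuclideanSpace ℝ (Fin n)))
        = t • f (t • x) := by
      ext v; simp
    rw [h4] at h3
    have h5 : f (t • x) = t⁻¹ • ((t:ℝ) ^ p • f x) := by
      rw [← h3, smul_smul, inv_mul_cancel₀ ht', one_smul]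
    rw [h5, smul_smul]
    congr 1
    rw [← Real.rpow_neg_one t, ← Real.rpow_add ht]
    ring_nf
  -- Step 2: homogeneity of the Hessian
  have step2 : ∀ t : ℝ, 0 < t → ∀ x v, F (t • x) v v = t ^ (p-2) * F x v v := by
    intro t ht x v
    have ht' : t ≠ 0 := ne_of_gt ht
    have hL : HasFDerivAt (fun y : EuclideanSpace ℝ (Fin n) => t • y)
        (t • ContinuousLinearMap.id ℝ (EuclideanSpace ℝ (Fin n))) x :=
      (hasFDerivAt_id x).const_smul t
    have h1 : HasFDerivAt (fun y => f (t • y))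
        ((F (t • x)).comp (t • ContinuousLinearMap.id ℝ (EuclideanSpace ℝ (Fin n)))) x :=
      ((hdf (t • x)).hasFDerivAt).comp x hL
    have h2 : HasFDerivAt (fun y => t ^ (p-1) • f y) ((t ^ (p-1)) • F x) x :=
      ((hdf x).hasFDerivAt).const_smul (t ^ (p-1))
    rw [show (fun y => f (t • y)) = fun y => t ^ (p-1) • f y
        from funext fun y => step1 t ht y] at h1
    have h3 := h1.unique h2
    have h4 : ((F (t • x)).comp (t • ContinuousLinearMap.id ℝ (EuclideanSpace ℝ (Fin n)))) v v
        = ((t ^ (p-1)) • F x) v v := by rw [h3]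
    have h5 : t * (F (t • x) v v) = t ^ (p-1) * (F x v v) := by
      simpa [ContinuousLinearMap.comp_apply, _root_.map_smul, smul_smul, mul_comm] using h4
    have h6 : t ^ (p-1) = t ^ (p-2) * t := by
      rw [show p - 1 = (p-2) + 1 by ring, Real.rpow_add ht, Real.rpow_one]
    rw [h6] at h5
    have h7 : t * (F (t • x) v v) = t * (t ^ (p-2) * F x v v) := by
      rw [h5]; ring
    exact mul_left_cancel₀ ht' h7
  -- ellipticity at every nonzero point
  have hFbound : ∀ y : EuclideanSpace ℝ (Fin n), y ≠ 0 → ∀ v : EuclideanSpace ℝ (Fin n),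
      lam * ‖y‖ ^ (p-2) * ‖v‖ ^ 2 ≤ F y v v ∧
      F y v v ≤ Lam * ‖y‖ ^ (p-2) * ‖v‖ ^ 2 := by
    intro y hy v
    have hny : (0:ℝ) < ‖y‖ := norm_pos_iff.mpr hy
    set u : EuclideanSpace ℝ (Fin n) := ‖y‖⁻¹ • y with hu
    have hnu : ‖u‖ = 1 := by
      rw [hu, norm_smul, norm_inv, norm_norm, inv_mul_cancel₀ (ne_of_gt hny)]
    have hyu : y = ‖y‖ • u := by
      rw [hu, smul_smul, mul_inv_cancel₀ (ne_of_gt hny), one_smul]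
    have hstep := step2 ‖y‖ hny u v
    rw [← hyu] at hstep
    have hb := hell u hnu v
    have hpow : (0:ℝ) ≤ ‖y‖ ^ (p-2) := Real.rpow_nonneg (norm_nonneg y) _
    constructor
    · calc lam * ‖y‖ ^ (p-2) * ‖v‖ ^ 2 = ‖y‖ ^ (p-2) * (lam * ‖v‖ ^ 2) := by ring
        _ ≤ ‖y‖ ^ (p-2) * (F u v v) := mul_le_mul_of_nonneg_left hb.1 hpow
        _ = F y v v := by rw [hstep]
    · calc F y v v = ‖y‖ ^ (p-2) * (F u v v) := hstep
        _ ≤ ‖y‖ ^ (p-2) * (Lam * ‖v‖ ^ 2) := mul_le_mul_of_nonneg_left hb.2 hpow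
        _ = Lam * ‖y‖ ^ (p-2) * ‖v‖ ^ 2 := by ring
  -- constants
  refine ⟨(1/4:ℝ) ^ (p-1), (2:ℝ) ^ (p-2), Real.rpow_pos_of_pos (by norm_num) _,
    Real.rpow_pos_of_pos (by norm_num) _, ?_⟩
  intro a b
  set w : EuclideanSpace ℝ (Fin n) := a - b with hwdef
  have key : ⟪gradient h a - gradient h b, w⟫ = f a w - f b w := by
    rw [inner_sub_left]
    simp [gradient, InnerProductSpace.toDual_symm_apply, hfdef]
  by_cases hw0 : w = 0
  · have hab : a = b := by
      have := hw0; rw [hwdef, sub_eq_zero] at this; exact this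
    constructor
    · rw [key, hab, hw0]
      simp [Real.zero_rpow (ne_of_gt hp0)]
    · rw [key, hab, hw0]
      simp [Real.zero_rpow (by norm_num : (2:ℝ) ≠ 0)]
  -- main case
  have hwn : (0:ℝ) < ‖w‖ := norm_pos_iff.mpr hw0
  have hφ : ∀ s : ℝ, HasDerivAt (fun s : ℝ => f (b + s • w) w) (F (b + s • w) w w) s := by
    intro s
    have hline : HasDerivAt (fun s : ℝ => b + s • w) w s := by
      simpa using ((hasDerivAt_id s).smul_const w).const_add b
    have h2 : HasFDerivAt f (F (b + s • w)) (b + s • w) := (hdf _).hasFDerivAt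
    have h3 : HasDerivAt (fun s : ℝ => f (b + s • w)) (F (b + s • w) w) s :=
      h2.comp_hasDerivAt s hline
    have h4 := h3.clm_apply (hasDerivAt_const s w)
    simpa using h4
  have hcont : Continuous (fun s : ℝ => F (b + s • w) w w) := by
    have h1 : Continuous (fun s : ℝ => b + s • w) :=
      continuous_const.add (continuous_id.smul continuous_const)
    have h2 : Continuous (fun s : ℝ => F (b + s • w)) := hFc.comp h1
    exact (h2.clm_apply continuous_const).clm_apply continuous_const
  have hii : IntervalIntegrable (fun s : ℝ => F (b + s • w) w w) volume 0 1 :=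
    hcont.intervalIntegrable 0 1
  have hint : (∫ s in (0:ℝ)..1, F (b + s • w) w w) = f a w - f b w := by
    have h0 := intervalIntegral.integral_eq_sub_of_hasDerivAt
      (f := fun s : ℝ => f (b + s • w) w) (fun s _ => hφ s) hii
    have e1 : b + (1:ℝ) • w = a := by rw [one_smul, hwdef]; abel
    have e0 : b + (0:ℝ) • w = b := by rw [zero_smul, add_zero]
    rw [e1, e0] at h0
    exact h0
  -- the exceptional set is null
  have hnull : (volume : Measure ℝ) {s : ℝ | b + s • w = 0} = 0 := by
    apply Set.Subsingleton.measure_zero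
    intro s hs s' hs'
    have h1 : s • w = s' • w := by
      have h2 : b + s • w = b + s' • w := by
        rw [Set.mem_setOf_eq] at hs hs'
        rw [hs, hs']
      exact add_left_cancel h2
    have h3 : (s - s') • w = 0 := by rw [sub_smul, h1, sub_self]
    have h4 : |s - s'| * ‖w‖ = 0 := by
      rw [← Real.norm_eq_abs, ← norm_smul, h3, norm_zero]
    have h5 : |s - s'| = 0 := by
      rcases mul_eq_zero.mp h4 with h' | h'
      · exact h'
      · exact absurd h' (ne_of_gt hwn)
    have h6 := abs_eq_zero.mp h5
    exact sub_eq_zero.mp h6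
  have haene : ∀ᵐ s : ℝ ∂(volume.restrict (Set.Icc (0:ℝ) 1)), b + s • w ≠ 0 := by
    refine ae_restrict_of_ae ?_
    have hset : {s : ℝ | ¬ b + s • w ≠ 0} = {s : ℝ | b + s • w = 0} :=
      Set.ext fun s => not_not
    rw [ae_iff, hset]
    exact hnull
  -- projection parameter
  set t0 : ℝ := -(⟪b, w⟫ / ‖w‖ ^ 2) with ht0
  clear_value t0
  have hw2 : (0:ℝ) < ‖w‖ ^ 2 := by positivity
  have hdist : ∀ s : ℝ, |s - t0| * ‖w‖ ≤ ‖b + s • w‖ := by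
    intro s
    have hCS : ⟪b, w⟫ ^ 2 ≤ ‖b‖ ^ 2 * ‖w‖ ^ 2 := by
      have h1 := abs_real_inner_le_norm b w
      have h2 : ⟪b, w⟫ ^ 2 = |⟪b, w⟫| ^ 2 := (sq_abs _).symm
      nlinarith [abs_nonneg (⟪b, w⟫), norm_nonneg b, norm_nonneg w]
    have hexp : ‖b + s • w‖ ^ 2 = ‖b‖ ^ 2 + 2 * (s * ⟪b, w⟫) + s ^ 2 * ‖w‖ ^ 2 := by
      rw [norm_add_sq_real, real_inner_smul_right, norm_smul]
      simp only [Real.norm_eq_abs, mul_pow, sq_abs]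
    have e : (s - t0) * ‖w‖ ^ 2 = s * ‖w‖ ^ 2 + ⟪b, w⟫ := by
      rw [ht0]; field_simp; ring
    have hsq' : ((s - t0) * ‖w‖ ^ 2) ^ 2 ≤ ‖b + s • w‖ ^ 2 * ‖w‖ ^ 2 := by
      rw [e, hexp]; nlinarith [hCS]
    have hsq : (|s - t0| * ‖w‖) ^ 2 ≤ ‖b + s • w‖ ^ 2 := by
      have h1 : ((|s - t0| * ‖w‖) ^ 2) * ‖w‖ ^ 2 ≤ (‖b + s • w‖ ^ 2) * ‖w‖ ^ 2 := by
        calc ((|s - t0| * ‖w‖) ^ 2) * ‖w‖ ^ 2 = ((s - t0) * ‖w‖ ^ 2) ^ 2 := by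
              rw [mul_pow, sq_abs]; ring
          _ ≤ ‖b + s • w‖ ^ 2 * ‖w‖ ^ 2 := hsq'
      exact le_of_mul_le_mul_right h1 hw2
    calc |s - t0| * ‖w‖ = Real.sqrt ((|s - t0| * ‖w‖) ^ 2) :=
          (Real.sqrt_sq (by positivity)).symm
      _ ≤ Real.sqrt (‖b + s • w‖ ^ 2) := Real.sqrt_le_sqrt hsq
      _ = ‖b + s • w‖ := Real.sqrt_sq (norm_nonneg _)
  -- lower bound
  set K : ℝ := lam * ‖w‖ ^ (p-2) * ‖w‖ ^ 2 with hK
  have hKnn : (0:ℝ) ≤ K := by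
    have := Real.rpow_nonneg (norm_nonneg w) (p-2)
    positivity
  have haelow : (fun s : ℝ => K * |s - t0| ^ (p-2))
      ≤ᵐ[volume.restrict (Set.Icc (0:ℝ) 1)] (fun s : ℝ => F (b + s • w) w w) := by
    filter_upwards [haene] with s hs
    have hb1 := (hFbound _ hs w).1
    have h2 : |s - t0| ^ (p-2) * ‖w‖ ^ (p-2) ≤ ‖b + s • w‖ ^ (p-2) := by
      rw [← Real.mul_rpow (abs_nonneg _) (norm_nonneg _)]
      exact Real.rpow_le_rpow (by positivity) (hdist s) hp2
    have h3 : lam * (|s - t0| ^ (p-2) * ‖w‖ ^ (p-2)) * ‖w‖ ^ 2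
        ≤ lam * ‖b + s • w‖ ^ (p-2) * ‖w‖ ^ 2 := by
      have := mul_le_mul_of_nonneg_left h2 (le_of_lt hlam)
      exact mul_le_mul_of_nonneg_right this (by positivity)
    calc K * |s - t0| ^ (p-2)
        = lam * (|s - t0| ^ (p-2) * ‖w‖ ^ (p-2)) * ‖w‖ ^ 2 := by rw [hK]; ring
      _ ≤ lam * ‖b + s • w‖ ^ (p-2) * ‖w‖ ^ 2 := h3
      _ ≤ F (b + s • w) w w := hb1
  have hiccont : Continuous (fun s : ℝ => |s - t0| ^ (p-2)) :=
    (Real.continuous_rpow_const hp2).comp (continuous_abs.comp (continuous_id.sub continuous_const))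
  have hψii : IntervalIntegrable (fun s : ℝ => K * |s - t0| ^ (p-2)) volume 0 1 :=
    (continuous_const.mul hiccont).intervalIntegrable 0 1
  have hmono1 : (∫ s in (0:ℝ)..1, K * |s - t0| ^ (p-2))
      ≤ ∫ s in (0:ℝ)..1, F (b + s • w) w w :=
    intervalIntegral.integral_mono_ae_restrict (by norm_num) hψii hii haelow
  have hnn : ∀ s : ℝ, (0:ℝ) ≤ |s - t0| ^ (p-2) := fun s => Real.rpow_nonneg (abs_nonneg _) _
  have hquarter : (1/4:ℝ) ^ (p-1) = (1/4:ℝ) * (1/4:ℝ) ^ (p-2) := by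
    rw [show p - 1 = (p-2) + 1 by ring, Real.rpow_add (by norm_num), Real.rpow_one]
    ring
  have haux : (1/4:ℝ) ^ (p-1) ≤ ∫ s in (0:ℝ)..1, |s - t0| ^ (p-2) := by
    by_cases ht : t0 ≤ 1/2
    · have hsplit := intervalIntegral.integral_add_adjacent_intervals
        (μ := volume) (a := (0:ℝ)) (b := (3/4:ℝ)) (c := (1:ℝ))
        (hiccont.intervalIntegrable _ _) (hiccont.intervalIntegrable _ _)
      have h1 : (0:ℝ) ≤ ∫ s in (0:ℝ)..(3/4:ℝ), |s - t0| ^ (p-2) :=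
        intervalIntegral.integral_nonneg (by norm_num) (fun s _ => hnn s)
      have hconst : (∫ _ in (3/4:ℝ)..1, ((1/4:ℝ) ^ (p-2))) = (1/4:ℝ) * (1/4:ℝ) ^ (p-2) := by
        rw [intervalIntegral.integral_const, smul_eq_mul]
        norm_num
      have h2 : (1/4:ℝ) * (1/4:ℝ) ^ (p-2) ≤ ∫ s in (3/4:ℝ)..1, |s - t0| ^ (p-2) := by
        rw [← hconst]
        refine intervalIntegral.integral_mono_on (by norm_num) intervalIntegrable_const
          (hiccont.intervalIntegrable _ _) (fun s hs => ?_)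
        obtain ⟨hs1, hs2⟩ := hs
        have h14 : (1/4:ℝ) ≤ |s - t0| := by
          rw [abs_of_nonneg (by linarith)]
          linarith
        exact Real.rpow_le_rpow (by norm_num) h14 hp2
      rw [hquarter, ← hsplit]
      linarith
    · push_neg at ht
      have hsplit := intervalIntegral.integral_add_adjacent_intervals
        (μ := volume) (a := (0:ℝ)) (b := (1/4:ℝ)) (c := (1:ℝ))
        (hiccont.intervalIntegrable _ _) (hiccont.intervalIntegrable _ _)
      have h1 : (0:ℝ) ≤ ∫ s in (1/4:ℝ)..1, |s - t0| ^ (p-2) :=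
        intervalIntegral.integral_nonneg (by norm_num) (fun s _ => hnn s)
      have hconst : (∫ _ in (0:ℝ)..(1/4:ℝ), ((1/4:ℝ) ^ (p-2))) = (1/4:ℝ) * (1/4:ℝ) ^ (p-2) := by
        rw [intervalIntegral.integral_const, smul_eq_mul]
        norm_num
      have h2 : (1/4:ℝ) * (1/4:ℝ) ^ (p-2) ≤ ∫ s in (0:ℝ)..(1/4:ℝ), |s - t0| ^ (p-2) := by
        rw [← hconst]
        refine intervalIntegral.integral_mono_on (by norm_num) intervalIntegrable_const
          (hiccont.intervalIntegrable _ _) (fun s hs => ?_)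
        obtain ⟨hs1, hs2⟩ := hs
        have h14 : (1/4:ℝ) ≤ |s - t0| := by
          rw [abs_of_nonpos (by linarith)]
          linarith
        exact Real.rpow_le_rpow (by norm_num) h14 hp2
      rw [hquarter, ← hsplit]
      linarith
  have hKint : (∫ s in (0:ℝ)..1, K * |s - t0| ^ (p-2))
      = K * ∫ s in (0:ℝ)..1, |s - t0| ^ (p-2) :=
    intervalIntegral.integral_const_mul K _
  have hwp : ‖w‖ ^ (p-2) * ‖w‖ ^ 2 = ‖w‖ ^ p := by
    rw [show (‖w‖:ℝ) ^ (2:ℕ) = ‖w‖ ^ ((2:ℕ):ℝ) from (Real.rpow_natCast _ 2).symm,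
      ← Real.rpow_add hwn]
    norm_num
  constructor
  · -- lower bound
    rw [key, ← hint]
    calc lam * (1/4:ℝ) ^ (p-1) * ‖w‖ ^ p = K * (1/4:ℝ) ^ (p-1) := by
          rw [hK, ← hwp]; ring
      _ ≤ K * ∫ s in (0:ℝ)..1, |s - t0| ^ (p-2) := mul_le_mul_of_nonneg_left haux hKnn
      _ = ∫ s in (0:ℝ)..1, K * |s - t0| ^ (p-2) := hKint.symm
      _ ≤ ∫ s in (0:ℝ)..1, F (b + s • w) w w := hmono1
  · -- upper bound
    set M : ℝ := max ‖b‖ ‖w‖ with hM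
    have hM0 : (0:ℝ) ≤ M := le_trans (norm_nonneg b) (le_max_left _ _)
    have haeup : (fun s : ℝ => F (b + s • w) w w)
        ≤ᵐ[volume.restrict (Set.Icc (0:ℝ) 1)]
          (fun _ : ℝ => Lam * (2*M) ^ (p-2) * ‖w‖ ^ 2) := by
      filter_upwards [haene, ae_restrict_mem measurableSet_Icc] with s hs hsmem
      have hb2 := (hFbound _ hs w).2
      have hsabs : |s| ≤ 1 := abs_le.mpr ⟨by linarith [hsmem.1], hsmem.2⟩
      have hle : ‖b + s • w‖ ≤ 2 * M := by
        calc ‖b + s • w‖ ≤ ‖b‖ + ‖s • w‖ := norm_add_le _ _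
          _ = ‖b‖ + |s| * ‖w‖ := by rw [norm_smul, Real.norm_eq_abs]
          _ ≤ M + 1 * M := by
              have h1 : ‖b‖ ≤ M := le_max_left _ _
              have h2 : |s| * ‖w‖ ≤ 1 * M :=
                mul_le_mul hsabs (le_max_right _ _) (norm_nonneg w) zero_le_one
              linarith
          _ = 2 * M := by ring
      have h3 : ‖b + s • w‖ ^ (p-2) ≤ (2*M) ^ (p-2) :=
        Real.rpow_le_rpow (norm_nonneg _) hle hp2
      calc F (b + s • w) w w ≤ Lam * ‖b + s • w‖ ^ (p-2) * ‖w‖ ^ 2 := hb2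
        _ ≤ Lam * (2*M) ^ (p-2) * ‖w‖ ^ 2 := by
            have := mul_le_mul_of_nonneg_left h3 (le_of_lt hLam)
            exact mul_le_mul_of_nonneg_right this (by positivity)
    have hup1 : (∫ s in (0:ℝ)..1, F (b + s • w) w w) ≤ Lam * (2*M) ^ (p-2) * ‖w‖ ^ 2 := by
      have h0 := intervalIntegral.integral_mono_ae_restrict (by norm_num : (0:ℝ) ≤ 1) hii
        intervalIntegrable_const haeup
      rw [intervalIntegral.integral_const, smul_eq_mul] at h0
      linarith
    have hmax : (2*M) ^ (p-2) = 2 ^ (p-2) * max (‖b‖ ^ (p-2)) (‖w‖ ^ (p-2)) := by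
      rw [Real.mul_rpow (by norm_num) hM0]
      congr 1
      rcases max_cases ‖b‖ ‖w‖ with ⟨h1, h2⟩ | ⟨h1, h2⟩
      · rw [hM, h1]
        exact (max_eq_left (Real.rpow_le_rpow (norm_nonneg _) h2 hp2)).symm
      · rw [hM, h1]
        exact (max_eq_right (Real.rpow_le_rpow (norm_nonneg _) (le_of_lt h2) hp2)).symm
    have h2r : ‖w‖ ^ (2:ℝ) = ‖w‖ ^ (2:ℕ) := by
      rw [show (2:ℝ) = ((2:ℕ):ℝ) by norm_num, Real.rpow_natCast]
    rw [key, ← hint]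
    calc (∫ s in (0:ℝ)..1, F (b + s • w) w w) ≤ Lam * (2*M) ^ (p-2) * ‖w‖ ^ 2 := hup1
      _ = Lam * 2 ^ (p-2) * ‖w‖ ^ (2:ℝ) * max (‖b‖ ^ (p-2)) (‖w‖ ^ (p-2)) := by
          rw [hmax, h2r]; ring
end

section
/- Let $p \geq 2$ and $h \in C^2(\mathbb{R}^n)$ be nonnegative, positively homogeneous of degree $p$, with $\lambda |v|^2 \leq \langle D^2 h(x) v, v \rangle$ for all unit vectors $x$ and all $v$. Then there is a constant $c_p > 0$ depending only on $p$ such that $|Dh(a) - Dh(b)| \geq \lambda c_p |a - b|^{p-1}$ for all $a, b \in \mathbb{R}^n$. -/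
open MeasureTheory
open scoped RealInnerProductSpace

variable {E F : Type*} [NormedAddCommGroup E] [NormedSpace ℝ E]
  [NormedAddCommGroup F] [NormedSpace ℝ F]

lemma fderiv_homog {f : E → F} (hd : Differentiable ℝ f) {t c : ℝ} (ht : 0 < t)
    (hf : ∀ x, f (t • x) = c • f x) (x : E) :
    fderiv ℝ f (t • x) = (c / t) • fderiv ℝ f x := by
  have h1 : HasFDerivAt (fun y => f (t • y))
      ((fderiv ℝ f (t • x)).comp (t • ContinuousLinearMap.id ℝ E)) x := by
    have hx : HasFDerivAt (fun y : E => t • y) (t • ContinuousLinearMap.id ℝ E) x :=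
      (hasFDerivAt_id x).const_smul t
    exact (hd (t • x)).hasFDerivAt.comp x hx
  have h2 : HasFDerivAt (fun y => f (t • y)) (c • fderiv ℝ f x) x := by
    have : (fun y => f (t • y)) = fun y => c • f y := funext hf
    rw [this]
    exact (hd x).hasFDerivAt.const_smul c
  have he := h1.unique h2
  rw [ContinuousLinearMap.comp_smul, ContinuousLinearMap.comp_id] at he
  have : fderiv ℝ f (t • x) = t⁻¹ • c • fderiv ℝ f x := by
    rw [← he, smul_smul, inv_mul_cancel₀ ht.ne', one_smul]
  rw [this, smul_smul, div_eq_inv_mul]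

set_option maxHeartbeats 2000000 in
/-- `|Dh(a) - Dh(b)| ≥ λ c_p |a-b|^{p-1}`. -/
theorem stmt_6 (n : ℕ) (p : ℝ) (hp : 2 ≤ p)
    (lam : ℝ) (hlam : 0 < lam)
    (h : EuclideanSpace ℝ (Fin n) → ℝ)
    (hC2 : ContDiff ℝ 2 h) (hpos : ∀ x, 0 ≤ h x)
    (hhom : ∀ t : ℝ, 0 < t → ∀ x, h (t • x) = t ^ p * h x)
    (hell : ∀ x : EuclideanSpace ℝ (Fin n), ‖x‖ = 1 →
      ∀ v : EuclideanSpace ℝ (Fin n),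
        lam * ‖v‖ ^ 2 ≤ fderiv ℝ (fderiv ℝ h) x v v) :
    ∃ c : ℝ, 0 < c ∧
      ∀ a b : EuclideanSpace ℝ (Fin n),
        lam * c * ‖a - b‖ ^ (p - 1) ≤ ‖gradient h a - gradient h b‖ := by
  classical
  have hd1 : Differentiable ℝ h := hC2.differentiable (by norm_num)
  have hC1u : ContDiff ℝ 1 (fderiv ℝ h) := hC2.fderiv_right (by norm_num)
  have hd2 : Differentiable ℝ (fderiv ℝ h) := hC1u.differentiable (by norm_num)
  have hcont2 : Continuous (fderiv ℝ (fderiv ℝ h)) := hC1u.continuous_fderiv (by norm_num)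
  -- homogeneity of fderiv h : degree p - 1
  have hA : ∀ t : ℝ, 0 < t → ∀ x : EuclideanSpace ℝ (Fin n), fderiv ℝ h (t • x) = (t ^ (p - 1)) • fderiv ℝ h x := by
    intro t ht x
    have h1 := fderiv_homog hd1 ht (c := t ^ p) (fun y => by
      rw [smul_eq_mul]; exact hhom t ht y) x
    rw [h1]
    congr 1
    rw [show p - 1 = p - 1 by ring]
    rw [show (p : ℝ) - 1 = p - 1 by ring, eq_comm,
      show t ^ (p - 1) = t ^ p / t from by
        rw [show p - 1 = p - 1 by ring, Real.rpow_sub ht, Real.rpow_one]]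
  -- homogeneity of D²h : degree p - 2
  have hB : ∀ t : ℝ, 0 < t → ∀ x : EuclideanSpace ℝ (Fin n),
      fderiv ℝ (fderiv ℝ h) (t • x) = (t ^ (p - 2)) • fderiv ℝ (fderiv ℝ h) x := by
    intro t ht x
    have h1 := fderiv_homog hd2 ht (c := t ^ (p - 1)) (hA t ht) x
    rw [h1]
    congr 1
    rw [show t ^ (p - 2) = t ^ (p - 1) / t from by
      rw [show p - 2 = (p - 1) - 1 by ring, Real.rpow_sub ht, Real.rpow_one]]
  -- pointwise ellipticity at every point (needs a unit vector for the p = 2, x = 0 case)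
  have hC' : (∃ e : EuclideanSpace ℝ (Fin n), ‖e‖ = 1) →
      ∀ (x v : EuclideanSpace ℝ (Fin n)),
        lam * ‖v‖ ^ 2 * ‖x‖ ^ (p - 2) ≤ fderiv ℝ (fderiv ℝ h) x v v := by
    rintro ⟨e, he⟩ x v
    rcases eq_or_ne x 0 with rfl | hx
    · rcases eq_or_lt_of_le hp with hp2 | hp2
      · -- p = 2 : D²h(0) = D²h(e) by homogeneity + continuity
        have hconst : ∀ t : ℝ, 0 < t → fderiv ℝ (fderiv ℝ h) (t • e) = fderiv ℝ (fderiv ℝ h) e := by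
          intro t ht
          rw [hB t ht e, show p - 2 = 0 by rw [← hp2]; ring, Real.rpow_zero, one_smul]
        have h0 : fderiv ℝ (fderiv ℝ h) 0 = fderiv ℝ (fderiv ℝ h) e := by
          have hlim : Filter.Tendsto (fun t : ℝ => fderiv ℝ (fderiv ℝ h) (t • e))
              (nhdsWithin 0 (Set.Ioi 0)) (nhds (fderiv ℝ (fderiv ℝ h) ((0:ℝ) • e))) := by
            apply (hcont2.tendsto _).comp
            exact ((continuous_id.smul continuous_const).tendsto 0).mono_left nhdsWithin_le_nhds
          have hlim2 : Filter.Tendsto (fun t : ℝ => fderiv ℝ (fderiv ℝ h) (t • e))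
              (nhdsWithin 0 (Set.Ioi 0)) (nhds (fderiv ℝ (fderiv ℝ h) e)) := by
            apply Filter.Tendsto.congr' _ tendsto_const_nhds
            filter_upwards [self_mem_nhdsWithin] with t ht
            exact (hconst t ht).symm
          have := tendsto_nhds_unique hlim hlim2
          simpa using this
        rw [h0]
        have := hell e he v
        calc lam * ‖v‖ ^ 2 * ‖(0 : EuclideanSpace ℝ (Fin n))‖ ^ (p - 2)
            = lam * ‖v‖ ^ 2 := by
              rw [show p - 2 = 0 by rw [← hp2]; ring, Real.rpow_zero, mul_one]
          _ ≤ _ := this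
      · -- p > 2 : D²h(0) = 0
        have h0 : fderiv ℝ (fderiv ℝ h) (0 : EuclideanSpace ℝ (Fin n)) = 0 := by
          have h2 := hB 2 (by norm_num) 0
          rw [smul_zero] at h2
          have h21 : (1 : ℝ) < (2:ℝ) ^ (p - 2) := by
            apply Real.one_lt_rpow_iff_of_pos (by norm_num) |>.mpr
            left; constructor <;> [norm_num; linarith]
          have hn : ‖fderiv ℝ (fderiv ℝ h) (0 : EuclideanSpace ℝ (Fin n))‖
              = 2 ^ (p - 2) * ‖fderiv ℝ (fderiv ℝ h) (0 : EuclideanSpace ℝ (Fin n))‖ := by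
            conv_lhs => rw [h2]
            rw [@norm_smul _ _ _ _ _ NormedSpace.toNormSMulClass ((2:ℝ) ^ (p - 2)) (fderiv ℝ (fderiv ℝ h) (0 : EuclideanSpace ℝ (Fin n))),
              Real.norm_eq_abs, abs_of_pos (by linarith)]
          have : ‖fderiv ℝ (fderiv ℝ h) (0 : EuclideanSpace ℝ (Fin n))‖ = 0 := by
            nlinarith [norm_nonneg (fderiv ℝ (fderiv ℝ h) (0 : EuclideanSpace ℝ (Fin n)))]
          exact (ContinuousLinearMap.opNorm_zero_iff _).mp this
        rw [h0]
        have : ‖(0 : EuclideanSpace ℝ (Fin n))‖ ^ (p - 2) = 0 := by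
          rw [norm_zero, Real.zero_rpow (by linarith)]
        rw [this, mul_zero]
        simp
    · -- x ≠ 0 : scale to the unit sphere
      set r : ℝ := ‖x‖ with hr
      have hr0 : 0 < r := norm_pos_iff.mpr hx
      have hxe : x = r • (r⁻¹ • x) := by rw [smul_smul, mul_inv_cancel₀ hr0.ne', one_smul]
      have hunit : ‖r⁻¹ • x‖ = 1 := by
        rw [norm_smul, norm_inv, norm_norm, inv_mul_cancel₀ hr0.ne']
      calc lam * ‖v‖ ^ 2 * r ^ (p - 2)
          ≤ (fderiv ℝ (fderiv ℝ h) (r⁻¹ • x) v v) * r ^ (p - 2) := by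
            apply mul_le_mul_of_nonneg_right (hell _ hunit v) (Real.rpow_nonneg hr0.le _)
        _ = fderiv ℝ (fderiv ℝ h) x v v := by
            conv_rhs => rw [hxe, hB r hr0]
            simp [ContinuousLinearMap.smul_apply, smul_eq_mul]
            ring
  -- choose the even exponent m and the constant c
  set m : ℕ := 2 * ⌈p⌉₊ with hmdef
  have hm1 : 1 ≤ m := by
    have : 1 ≤ ⌈p⌉₊ := Nat.one_le_ceil_iff.mpr (by linarith)
    omega
  have hmp : p - 2 ≤ (m : ℝ) := by
    have h1 : p ≤ (⌈p⌉₊ : ℝ) := Nat.le_ceil p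
    have h2 : ((⌈p⌉₊ : ℕ) : ℝ) ≤ (m : ℝ) := by
      rw [hmdef]; push_cast; nlinarith [Nat.le_ceil p]
    linarith
  have hmeven : Even m := ⟨⌈p⌉₊, by omega⟩
  refine ⟨(1/2) ^ (m+1) / ((m:ℝ)+1), by positivity, ?_⟩
  intro a b
  rcases eq_or_ne a b with rfl | hab
  · rw [sub_self, norm_zero, Real.zero_rpow (by linarith), mul_zero]
    exact norm_nonneg _
  · set v : EuclideanSpace ℝ (Fin n) := a - b with hvdef
    have hv : v ≠ 0 := sub_ne_zero.mpr hab
    have hv0 : 0 < ‖v‖ := norm_pos_iff.mpr hv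
    have hunit : ‖(‖v‖⁻¹ • v : EuclideanSpace ℝ (Fin n))‖ = 1 := by
      rw [norm_smul, norm_inv, norm_norm, inv_mul_cancel₀ hv0.ne']
    have hCe := hC' ⟨_, hunit⟩
    set γ : ℝ → EuclideanSpace ℝ (Fin n) := fun t => b + t • v with hγdef
    have hγ : ∀ t : ℝ, HasDerivAt γ v t := by
      intro t
      have := ((hasDerivAt_id t).smul_const v).const_add b
      simpa [hγdef] using this
    have hγc : Continuous γ := by
      apply continuous_const.add (continuous_id.smul continuous_const)
    set g : ℝ → ℝ := fun t => fderiv ℝ h (γ t) v with hgdef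
    set g' : ℝ → ℝ := fun t => fderiv ℝ (fderiv ℝ h) (γ t) v v with hg'def
    have hg : ∀ t : ℝ, HasDerivAt g (g' t) t := by
      intro t
      have hu : HasDerivAt (fun s => fderiv ℝ h (γ s)) (fderiv ℝ (fderiv ℝ h) (γ t) v) t :=
        ((hd2 (γ t)).hasFDerivAt).comp_hasDerivAt t (hγ t)
      have := hu.clm_apply (hasDerivAt_const t v)
      simpa using this
    have hg'c : Continuous g' := by
      exact ((hcont2.comp hγc).clm_apply continuous_const).clm_apply continuous_const
    -- FTC
    have hInt1 : IntervalIntegrable g' volume 0 1 := hg'c.intervalIntegrable 0 1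
    have hFTC : ∫ t in (0:ℝ)..1, g' t = g 1 - g 0 :=
      intervalIntegral.integral_eq_sub_of_hasDerivAt (fun t _ => hg t) hInt1
    -- projection parameter
    obtain ⟨ibv, hibvdef⟩ : ∃ r : ℝ, r = ⟪b, v⟫ := ⟨_, rfl⟩
    obtain ⟨t₀, ht₀def⟩ : ∃ r : ℝ, r = -ibv / ‖v‖^2 := ⟨_, rfl⟩
    have hipr : ibv = -t₀ * ‖v‖^2 := by
      rw [ht₀def]; field_simp
    have hexp : ∀ s : ℝ, ‖γ s‖^2 = ‖b‖^2 + 2*s*ibv + s^2*‖v‖^2 := by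
      intro s
      simp only [hγdef]
      rw [hibvdef, norm_add_sq_real, real_inner_smul_right, norm_smul, mul_pow,
        Real.norm_eq_abs, sq_abs]
      ring
    have hproj : ∀ t : ℝ, ‖v‖ * |t - t₀| ≤ ‖γ t‖ := by
      intro t
      have hsq : (‖v‖ * |t - t₀|)^2 ≤ ‖γ t‖^2 := by
        rw [mul_pow, sq_abs, hexp t, hipr]
        have h2 := hexp t₀
        rw [hipr] at h2
        nlinarith [h2, sq_nonneg ‖γ t₀‖]
      have h1 := Real.sqrt_le_sqrt hsq
      rwa [Real.sqrt_sq (by positivity), Real.sqrt_sq (norm_nonneg _)] at h1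
    -- clamped parameter
    set s₀ : ℝ := max 0 (min 1 t₀) with hs₀def
    have hs₀0 : 0 ≤ s₀ := le_max_left _ _
    have hs₀1 : s₀ ≤ 1 := max_le (by norm_num) (min_le_left _ _)
    have hclamp : ∀ t ∈ Set.Icc (0:ℝ) 1, |t - s₀| ≤ |t - t₀| := by
      intro t ht
      obtain ⟨ht0, ht1⟩ := ht
      rcases le_total t₀ 0 with h1 | h1
      · have : s₀ = 0 := by rw [hs₀def, min_eq_right (by linarith), max_eq_left (by linarith)]
        rw [this, sub_zero, abs_of_nonneg ht0, abs_of_nonneg (by linarith)]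
        linarith
      · rcases le_total 1 t₀ with h2 | h2
        · have : s₀ = 1 := by rw [hs₀def, min_eq_left h2, max_eq_right (by linarith)]
          rw [this, abs_of_nonpos (by linarith), abs_of_nonpos (by linarith)]
          linarith
        · have : s₀ = t₀ := by rw [hs₀def, min_eq_right h2, max_eq_right h1]
          rw [this]
    -- pointwise lower bound for g'
    have hpt : ∀ t ∈ Set.Icc (0:ℝ) 1,
        lam * ‖v‖^2 * ‖v‖ ^ (p-2) * (t - s₀)^m ≤ g' t := by
      intro t ht
      have hb1 : ((t - s₀)^m : ℝ) = |t - s₀|^m := (hmeven.pow_abs _).symm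
      have hb2 : |t - s₀| ≤ 1 := by
        rw [abs_le]; constructor <;> [linarith [ht.1, hs₀1]; linarith [ht.2, hs₀0]]
      have hstep1 : |t - s₀|^m ≤ |t - s₀| ^ (p-2) := by
        rcases eq_or_lt_of_le (abs_nonneg (t - s₀)) with h0 | h0
        · rw [← h0]
          rw [zero_pow (by omega)]
          exact Real.rpow_nonneg le_rfl _
        · calc |t - s₀|^m = |t - s₀| ^ ((m:ℝ)) := (Real.rpow_natCast _ m).symm
            _ ≤ |t - s₀| ^ (p-2) := Real.rpow_le_rpow_of_exponent_ge h0 hb2 hmp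
      have hstep2 : |t - s₀| ^ (p-2) ≤ |t - t₀| ^ (p-2) :=
        Real.rpow_le_rpow (abs_nonneg _) (hclamp t ht) (by linarith)
      have hstep3 : ‖v‖ ^ (p-2) * |t - t₀| ^ (p-2) ≤ ‖γ t‖ ^ (p-2) := by
        rw [← Real.mul_rpow (norm_nonneg _) (abs_nonneg _)]
        exact Real.rpow_le_rpow (by positivity) (hproj t) (by linarith)
      have hfinal := hCe (γ t) v
      have hnn : (0:ℝ) ≤ lam * ‖v‖^2 := by positivity
      calc lam * ‖v‖^2 * ‖v‖ ^ (p-2) * (t - s₀)^m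
          = lam * ‖v‖^2 * (‖v‖ ^ (p-2) * |t - s₀|^m) := by rw [hb1]; ring
        _ ≤ lam * ‖v‖^2 * (‖v‖ ^ (p-2) * |t - t₀| ^ (p-2)) := by
            apply mul_le_mul_of_nonneg_left _ hnn
            exact mul_le_mul_of_nonneg_left (hstep1.trans hstep2) (by positivity)
        _ ≤ lam * ‖v‖^2 * ‖γ t‖ ^ (p-2) := mul_le_mul_of_nonneg_left hstep3 hnn
        _ ≤ g' t := hfinal
    -- integrate
    have hInt0 : IntervalIntegrable (fun t => lam * ‖v‖^2 * ‖v‖ ^ (p-2) * (t - s₀)^m) volume 0 1 := by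
      exact (continuous_const.mul ((continuous_id.sub continuous_const).pow m)).intervalIntegrable 0 1
    have hmono := intervalIntegral.integral_mono_on (by norm_num : (0:ℝ) ≤ 1) hInt0 hInt1 hpt
    have hIcomp : ∫ t in (0:ℝ)..1, lam * ‖v‖^2 * ‖v‖ ^ (p-2) * (t - s₀)^m
        = lam * ‖v‖^2 * ‖v‖ ^ (p-2) * (((1-s₀)^(m+1) + s₀^(m+1)) / ((m:ℝ)+1)) := by
      rw [intervalIntegral.integral_const_mul]
      rw [intervalIntegral.integral_comp_sub_right (fun u => u^m) s₀, integral_pow]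
      congr 1
      rw [zero_sub, Odd.neg_pow (hmeven.add_one) s₀]
      push_cast
      ring
    -- lower bound for the polynomial factor
    have hpolysum : ((1:ℝ)/2) ^ (m+1) ≤ (1-s₀)^(m+1) + s₀^(m+1) := by
      rcases le_total s₀ (1/2) with hs | hs
      · have h1 : ((1:ℝ)/2) ≤ 1 - s₀ := by linarith
        have h2 := pow_le_pow_left₀ (by norm_num : (0:ℝ) ≤ 1/2) h1 (m+1)
        nlinarith [pow_nonneg hs₀0 (m+1)]
      · have h2 := pow_le_pow_left₀ (by norm_num : (0:ℝ) ≤ 1/2) hs (m+1)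
        nlinarith [pow_nonneg (by linarith : (0:ℝ) ≤ 1 - s₀) (m+1)]
    -- express g 1 - g 0 as an inner product
    have hgrad : ∀ (x w : EuclideanSpace ℝ (Fin n)), fderiv ℝ h x w = ⟪gradient h x, w⟫ := by
      intro x w
      rw [(hd1 x).hasGradientAt.hasFDerivAt.fderiv]
      exact InnerProductSpace.toDual_apply_apply
    have hγ1 : γ 1 = a := by
      simp only [hγdef, one_smul, hvdef]
      rw [add_comm, sub_add_cancel]
    have hγ0 : γ 0 = b := by simp only [hγdef, zero_smul, add_zero]
    have hsum : g 1 - g 0 = ⟪gradient h a - gradient h b, v⟫ := by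
      simp only [hgdef, hγ1, hγ0, hgrad, inner_sub_left]
    -- put everything together
    have hkey : lam * ‖v‖^2 * ‖v‖ ^ (p-2) * (((1-s₀)^(m+1) + s₀^(m+1)) / ((m:ℝ)+1))
        ≤ ⟪gradient h a - gradient h b, v⟫ := by
      rw [← hsum, ← hFTC, ← hIcomp]
      exact hmono
    have hCS : ⟪gradient h a - gradient h b, v⟫ ≤ ‖gradient h a - gradient h b‖ * ‖v‖ :=
      real_inner_le_norm _ _
    have e3 : ‖v‖^(2:ℕ) * ‖v‖ ^ (p-2) = ‖v‖ ^ p := by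
      rw [← Real.rpow_natCast ‖v‖ 2, ← Real.rpow_add hv0]
      norm_num
    have e2 : ‖v‖ ^ (p-1) * ‖v‖ = ‖v‖ ^ p := by
      nth_rewrite 2 [← Real.rpow_one ‖v‖]
      rw [← Real.rpow_add hv0]
      norm_num
    have hfin : lam * ((1/2) ^ (m+1) / ((m:ℝ)+1)) * ‖v‖ ^ (p-1) * ‖v‖
        ≤ ‖gradient h a - gradient h b‖ * ‖v‖ := by
      refine le_trans ?_ (hkey.trans hCS)
      calc lam * ((1/2) ^ (m+1) / ((m:ℝ)+1)) * ‖v‖ ^ (p-1) * ‖v‖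
          = lam * (‖v‖ ^ (p-1) * ‖v‖) * ((1/2) ^ (m+1) / ((m:ℝ)+1)) := by ring
        _ = lam * (‖v‖^(2:ℕ) * ‖v‖ ^ (p-2)) * ((1/2) ^ (m+1) / ((m:ℝ)+1)) := by
            rw [e2, e3]
        _ ≤ lam * (‖v‖^(2:ℕ) * ‖v‖ ^ (p-2)) * (((1-s₀)^(m+1) + s₀^(m+1)) / ((m:ℝ)+1)) := by
            have hnn : (0:ℝ) ≤ lam * (‖v‖^(2:ℕ) * ‖v‖ ^ (p-2)) := by positivity
            apply mul_le_mul_of_nonneg_left _ hnn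
            gcongr
        _ = lam * ‖v‖^2 * ‖v‖ ^ (p-2) * (((1-s₀)^(m+1) + s₀^(m+1)) / ((m:ℝ)+1)) := by ring
    exact le_of_mul_le_mul_right hfin hv0
end

section
/- Let $h \in C^2(\mathbb{R}^n)$ and let $T: \mathbb{R}^n \to \mathcal{P}(\mathbb{R}^n)$ be a multivalued map. Then $T$ is $h$-monotone (i.e., $h(x-\xi) + h(y-\zeta) \leq h(x-\zeta) + h(y-\xi)$ for all $x,y$ in the domain of $T$, $\xi \in T(x)$, $\zeta \in T(y)$) if and only if $\langle A(x,y;\xi,\zeta)(x-y), \xi - \zeta \rangle \geq 0$ for all such $x, y, \xi, \zeta$, where $A(x,y;\xi,\zeta) = \int_0^1 \int_0^1 D^2 h(y - \zeta + s(\zeta - \xi) + t(x-y)) \, dt \, ds$. -/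
open MeasureTheory intervalIntegral

lemma aux_double_integral {E : Type*} [NormedAddCommGroup E] [NormedSpace ℝ E]
    (h : E → ℝ) (hC2 : ContDiff ℝ 2 h) (x y ξ ζ : E) :
    ∫ s in (0:ℝ)..1, ∫ t in (0:ℝ)..1,
      fderiv ℝ (fderiv ℝ h) (y - ζ + s • (ζ - ξ) + t • (x - y)) (x - y) (ξ - ζ)
    = (h (x - ζ) + h (y - ξ)) - (h (x - ξ) + h (y - ζ)) := by
  have hd1 : Differentiable ℝ h := hC2.differentiable two_ne_zero
  have hC1 : ContDiff ℝ 1 (fderiv ℝ h) := hC2.fderiv_right (by norm_num)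
  have hd2 : Differentiable ℝ (fderiv ℝ h) := hC1.differentiable one_ne_zero
  have hcont2 : Continuous (fderiv ℝ (fderiv ℝ h)) := hC1.continuous_fderiv one_ne_zero
  set u : ℝ → ℝ → E := fun s t => y - ζ + s • (ζ - ξ) + t • (x - y) with hu
  have hu_t : ∀ s t : ℝ, HasDerivAt (fun t => u s t) (x - y) t := by
    intro s t
    simpa [hu] using (((hasDerivAt_id t).smul_const (x - y)).const_add (y - ζ + s • (ζ - ξ)))
  have hu_s : ∀ s t : ℝ, HasDerivAt (fun s => u s t) (ζ - ξ) s := by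
    intro s t
    have := ((((hasDerivAt_id s).smul_const (ζ - ξ)).const_add (y - ζ)).add_const (t • (x - y)))
    simpa [hu] using this
  have hu_cont_t : ∀ s : ℝ, Continuous (fun t => u s t) := by
    intro s; fun_prop
  have hu_cont_s : ∀ t : ℝ, Continuous (fun s => u s t) := by
    intro t; fun_prop
  have inner : ∀ s : ℝ, (∫ t in (0:ℝ)..1,
      fderiv ℝ (fderiv ℝ h) (u s t) (x - y) (ξ - ζ))
      = fderiv ℝ h (u s 1) (ξ - ζ) - fderiv ℝ h (u s 0) (ξ - ζ) := by
    intro s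
    refine intervalIntegral.integral_eq_sub_of_hasDerivAt
      (f := fun t => fderiv ℝ h (u s t) (ξ - ζ)) ?_ ?_
    · intro t _
      have h1 : HasFDerivAt (fderiv ℝ h) (fderiv ℝ (fderiv ℝ h) (u s t)) (u s t) :=
        (hd2 _).hasFDerivAt
      have h2 : HasDerivAt (fun t => fderiv ℝ h (u s t))
          (fderiv ℝ (fderiv ℝ h) (u s t) (x - y)) t := h1.comp_hasDerivAt t (hu_t s t)
      simpa using h2.clm_apply (hasDerivAt_const t (ξ - ζ))
    · apply Continuous.intervalIntegrable
      exact ((hcont2.comp (hu_cont_t s)).clm_apply continuous_const).clm_apply continuous_const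
  have outer : ∀ t : ℝ, (∫ s in (0:ℝ)..1, fderiv ℝ h (u s t) (ξ - ζ))
      = h (u 0 t) - h (u 1 t) := by
    intro t
    have key : (∫ s in (0:ℝ)..1, fderiv ℝ h (u s t) (ξ - ζ))
        = (-h (u 1 t)) - (-h (u 0 t)) := by
      refine intervalIntegral.integral_eq_sub_of_hasDerivAt
        (f := fun s => -h (u s t)) ?_ ?_
      · intro s _
        have h1 : HasDerivAt (fun s => h (u s t)) (fderiv ℝ h (u s t) (ζ - ξ)) s :=
          (hd1 (u s t)).hasFDerivAt.comp_hasDerivAt s (hu_s s t)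
        have h2 := h1.neg
        have h3 : -(fderiv ℝ h (u s t) (ζ - ξ)) = fderiv ℝ h (u s t) (ξ - ζ) := by
          rw [← map_neg, neg_sub]
        rwa [h3] at h2
      · apply Continuous.intervalIntegrable
        exact ((hC1.continuous.comp (hu_cont_s t)).clm_apply continuous_const)
    rw [key]; ring
  have int1 : IntervalIntegrable (fun s => fderiv ℝ h (u s 1) (ξ - ζ)) volume 0 1 := by
    apply Continuous.intervalIntegrable
    exact ((hC1.continuous.comp (hu_cont_s 1)).clm_apply continuous_const)
  have int0 : IntervalIntegrable (fun s => fderiv ℝ h (u s 0) (ξ - ζ)) volume 0 1 := by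
    apply Continuous.intervalIntegrable
    exact ((hC1.continuous.comp (hu_cont_s 0)).clm_apply continuous_const)
  calc (∫ s in (0:ℝ)..1, ∫ t in (0:ℝ)..1,
        fderiv ℝ (fderiv ℝ h) (u s t) (x - y) (ξ - ζ))
      = ∫ s in (0:ℝ)..1, (fderiv ℝ h (u s 1) (ξ - ζ) - fderiv ℝ h (u s 0) (ξ - ζ)) := by
        exact intervalIntegral.integral_congr (fun s _ => inner s)
    _ = (∫ s in (0:ℝ)..1, fderiv ℝ h (u s 1) (ξ - ζ))
        - (∫ s in (0:ℝ)..1, fderiv ℝ h (u s 0) (ξ - ζ)) :=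
        intervalIntegral.integral_sub int1 int0
    _ = (h (u 0 1) - h (u 1 1)) - (h (u 0 0) - h (u 1 0)) := by rw [outer 1, outer 0]
    _ = (h (x - ζ) + h (y - ξ)) - (h (x - ξ) + h (y - ζ)) := by
        have e1 : u 0 1 = x - ζ := by simp [hu]
        have e2 : u 1 1 = x - ξ := by simp [hu]
        have e3 : u 0 0 = y - ζ := by simp [hu]
        have e4 : u 1 0 = y - ξ := by simp [hu]
        rw [e1, e2, e3, e4]; ring

/-- Equivalence of `h`-monotonicity with the integral inequality involving
`A(x,y;ξ,ζ) = ∫₀¹∫₀¹ D²h(y - ζ + s(ζ-ξ) + t(x-y)) dt ds`. -/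
theorem stmt_7 (n : ℕ) (h : EuclideanSpace ℝ (Fin n) → ℝ) (hC2 : ContDiff ℝ 2 h)
    (T : EuclideanSpace ℝ (Fin n) → Set (EuclideanSpace ℝ (Fin n))) :
    (∀ x y : EuclideanSpace ℝ (Fin n), ∀ ξ ∈ T x, ∀ ζ ∈ T y,
        h (x - ξ) + h (y - ζ) ≤ h (x - ζ) + h (y - ξ)) ↔
    (∀ x y : EuclideanSpace ℝ (Fin n), ∀ ξ ∈ T x, ∀ ζ ∈ T y,
        0 ≤ ∫ s in (0:ℝ)..1, ∫ t in (0:ℝ)..1,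
          fderiv ℝ (fderiv ℝ h) (y - ζ + s • (ζ - ξ) + t • (x - y)) (x - y) (ξ - ζ)) := by
  constructor
  · intro H x y ξ hξ ζ hζ
    rw [aux_double_integral h hC2 x y ξ ζ]
    have := H x y ξ hξ ζ hζ
    linarith
  · intro H x y ξ hξ ζ hζ
    have := H x y ξ hξ ζ hζ
    rw [aux_double_integral h hC2 x y ξ ζ] at this
    linarith
end
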